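/- The solution achieves asymptotic consensus: the global diameter d(t) := max{ max_{i,j=1,…,N} |x_i(t) − x_j(t)|, max_{i,j=1,…,M} |y_i(t) − y_j(t)|, max_{i=1,…,N} max_{j=1,…,M} |x_i(t) − y_j(t)| } satisfies d(t) → 0 as t → +∞. -/

import Mathlib

open Real Set Filter Topology
open scoped BigOperators RealInnerProductSpace

noncomputable section

/-- `Λ` : the maximum of the sup-norms of the four (positive) influence functions. -/
def Lam {d : ℕ} (ψ ψs φ φs : EuclideanSpace ℝ (Fin d) → EuclideanSpace ℝ (Fin d) → ℝ) : ℝ :=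
  max
    (max (⨆ p : EuclideanSpace ℝ (Fin d) × EuclideanSpace ℝ (Fin d), ψ p.1 p.2)
         (⨆ p : EuclideanSpace ℝ (Fin d) × EuclideanSpace ℝ (Fin d), ψs p.1 p.2))
    (max (⨆ p : EuclideanSpace ℝ (Fin d) × EuclideanSpace ℝ (Fin d), φ p.1 p.2)
         (⨆ p : EuclideanSpace ℝ (Fin d) × EuclideanSpace ℝ (Fin d), φs p.1 p.2))

/-- An influence function is admissible when it is continuous, positive and bounded. -/
def Admissible {d : ℕ} (f : EuclideanSpace ℝ (Fin d) → EuclideanSpace ℝ (Fin d) → ℝ) : Prop :=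
  Continuous (fun p : EuclideanSpace ℝ (Fin d) × EuclideanSpace ℝ (Fin d) => f p.1 p.2) ∧
    (∀ z₁ z₂, 0 < f z₁ z₂) ∧
    BddAbove (Set.range fun p : EuclideanSpace ℝ (Fin d) × EuclideanSpace ℝ (Fin d) => f p.1 p.2)

/-- `(x, y)` is a global classical solution of the two-population delayed
Hegselmann–Krause system, with `k` (resp. `h`) leaders in the first (resp. second)
population and time delay `τ`. -/
structure IsSol {d N M : ℕ} (h k : ℕ) (τ : ℝ)
    (ψ ψs φ φs : EuclideanSpace ℝ (Fin d) → EuclideanSpace ℝ (Fin d) → ℝ)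
    (x : Fin N → ℝ → EuclideanSpace ℝ (Fin d))
    (y : Fin M → ℝ → EuclideanSpace ℝ (Fin d)) : Prop where
  contx : ∀ i, Continuous (x i)
  conty : ∀ j, Continuous (y j)
  odex_lead : ∀ i : Fin N, (i : ℕ) < k → ∀ t : ℝ, 0 < t →
    HasDerivAt (x i)
      ((∑ j ∈ Finset.univ.erase i,
          (ψ (x i t) (x j t) / ((N : ℝ) + h - 1)) • (x j t - x i t)) +
        ∑ j ∈ Finset.univ.filter (fun j : Fin M => (j : ℕ) < h),
          (φ (x i t) (y j (t - τ)) / ((N : ℝ) + h - 1)) • (y j (t - τ) - x i t)) t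
  odex_foll : ∀ i : Fin N, k ≤ (i : ℕ) → ∀ t : ℝ, 0 < t →
    HasDerivAt (x i)
      (∑ j ∈ Finset.univ.erase i,
          (ψ (x i t) (x j t) / ((N : ℝ) - 1)) • (x j t - x i t)) t
  odey_lead : ∀ i : Fin M, (i : ℕ) < h → ∀ t : ℝ, 0 < t →
    HasDerivAt (y i)
      ((∑ j ∈ Finset.univ.erase i,
          (ψs (y i t) (y j t) / ((M : ℝ) + k - 1)) • (y j t - y i t)) +
        ∑ j ∈ Finset.univ.filter (fun j : Fin N => (j : ℕ) < k),
          (φs (y i t) (x j (t - τ)) / ((M : ℝ) + k - 1)) • (x j (t - τ) - y i t)) t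
  odey_foll : ∀ i : Fin M, h ≤ (i : ℕ) → ∀ t : ℝ, 0 < t →
    HasDerivAt (y i)
      (∑ j ∈ Finset.univ.erase i,
          (ψs (y i t) (y j t) / ((M : ℝ) - 1)) • (y j t - y i t)) t

/-- `m_0` : the minimum of the projections on `v` of the initial data. -/
def mInit {d N M : ℕ} (h k : ℕ) (τ : ℝ) (v : EuclideanSpace ℝ (Fin d))
    (x : Fin N → ℝ → EuclideanSpace ℝ (Fin d))
    (y : Fin M → ℝ → EuclideanSpace ℝ (Fin d)) : ℝ :=
  min
    (min (⨅ p : {i : Fin N // (i : ℕ) < k} × (Icc (-τ) (0 : ℝ)), ⟪x p.1.1 (p.2 : ℝ), v⟫)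
         (⨅ i : {i : Fin N // k ≤ (i : ℕ)}, ⟪x i.1 0, v⟫))
    (min (⨅ p : {j : Fin M // (j : ℕ) < h} × (Icc (-τ) (0 : ℝ)), ⟪y p.1.1 (p.2 : ℝ), v⟫)
         (⨅ j : {j : Fin M // h ≤ (j : ℕ)}, ⟪y j.1 0, v⟫))

/-- `M_0` : the maximum of the projections on `v` of the initial data. -/
def MInit {d N M : ℕ} (h k : ℕ) (τ : ℝ) (v : EuclideanSpace ℝ (Fin d))
    (x : Fin N → ℝ → EuclideanSpace ℝ (Fin d))
    (y : Fin M → ℝ → EuclideanSpace ℝ (Fin d)) : ℝ :=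
  max
    (max (⨆ p : {i : Fin N // (i : ℕ) < k} × (Icc (-τ) (0 : ℝ)), ⟪x p.1.1 (p.2 : ℝ), v⟫)
         (⨆ i : {i : Fin N // k ≤ (i : ℕ)}, ⟪x i.1 0, v⟫))
    (max (⨆ p : {j : Fin M // (j : ℕ) < h} × (Icc (-τ) (0 : ℝ)), ⟪y p.1.1 (p.2 : ℝ), v⟫)
         (⨆ j : {j : Fin M // h ≤ (j : ℕ)}, ⟪y j.1 0, v⟫))

/-- `C_0` : the maximum of the norms of the initial data. -/
def Cinit {d N M : ℕ} (h k : ℕ) (τ : ℝ)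
    (x : Fin N → ℝ → EuclideanSpace ℝ (Fin d))
    (y : Fin M → ℝ → EuclideanSpace ℝ (Fin d)) : ℝ :=
  max
    (max (⨆ p : {i : Fin N // (i : ℕ) < k} × (Icc (-τ) (0 : ℝ)), ‖x p.1.1 (p.2 : ℝ)‖)
         (⨆ i : {i : Fin N // k ≤ (i : ℕ)}, ‖x i.1 0‖))
    (max (⨆ p : {j : Fin M // (j : ℕ) < h} × (Icc (-τ) (0 : ℝ)), ‖y p.1.1 (p.2 : ℝ)‖)
         (⨆ j : {j : Fin M // h ≤ (j : ℕ)}, ‖y j.1 0‖))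

/-- the minimum of an influence function on the ball of radius `C` (in each variable). -/
def minOnBall {d : ℕ} (C : ℝ)
    (f : EuclideanSpace ℝ (Fin d) → EuclideanSpace ℝ (Fin d) → ℝ) : ℝ :=
  ⨅ p : {z : EuclideanSpace ℝ (Fin d) × EuclideanSpace ℝ (Fin d) // ‖z.1‖ ≤ C ∧ ‖z.2‖ ≤ C},
    f p.1.1 p.1.2

/-- `Γ := min {ψ₀, ψ*₀, φ₀, φ*₀}`. -/
def Gam {d N M : ℕ} (h k : ℕ) (τ : ℝ)
    (ψ ψs φ φs : EuclideanSpace ℝ (Fin d) → EuclideanSpace ℝ (Fin d) → ℝ)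
    (x : Fin N → ℝ → EuclideanSpace ℝ (Fin d))
    (y : Fin M → ℝ → EuclideanSpace ℝ (Fin d)) : ℝ :=
  min (min (minOnBall (Cinit h k τ x y) ψ) (minOnBall (Cinit h k τ x y) ψs))
      (min (minOnBall (Cinit h k τ x y) φ) (minOnBall (Cinit h k τ x y) φs))

/-- `m_n` : minimum of the projections on `v` over the time mesh `I_n = [(6n-1)τ, 6nτ]`. -/
def mSeq {d N M : ℕ} (h k : ℕ) (τ : ℝ) (v : EuclideanSpace ℝ (Fin d))
    (x : Fin N → ℝ → EuclideanSpace ℝ (Fin d))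
    (y : Fin M → ℝ → EuclideanSpace ℝ (Fin d)) (n : ℕ) : ℝ :=
  min
    (min (⨅ p : {i : Fin N // (i : ℕ) < k} × (Icc ((6 * (n : ℝ) - 1) * τ) (6 * (n : ℝ) * τ)),
            ⟪x p.1.1 (p.2 : ℝ), v⟫)
         (⨅ i : {i : Fin N // k ≤ (i : ℕ)}, ⟪x i.1 (6 * (n : ℝ) * τ), v⟫))
    (min (⨅ p : {j : Fin M // (j : ℕ) < h} × (Icc ((6 * (n : ℝ) - 1) * τ) (6 * (n : ℝ) * τ)),
            ⟪y p.1.1 (p.2 : ℝ), v⟫)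
         (⨅ j : {j : Fin M // h ≤ (j : ℕ)}, ⟪y j.1 (6 * (n : ℝ) * τ), v⟫))

/-- `M_n` : maximum of the projections on `v` over the time mesh `I_n = [(6n-1)τ, 6nτ]`. -/
def MSeq {d N M : ℕ} (h k : ℕ) (τ : ℝ) (v : EuclideanSpace ℝ (Fin d))
    (x : Fin N → ℝ → EuclideanSpace ℝ (Fin d))
    (y : Fin M → ℝ → EuclideanSpace ℝ (Fin d)) (n : ℕ) : ℝ :=
  max
    (max (⨆ p : {i : Fin N // (i : ℕ) < k} × (Icc ((6 * (n : ℝ) - 1) * τ) (6 * (n : ℝ) * τ)),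
            ⟪x p.1.1 (p.2 : ℝ), v⟫)
         (⨆ i : {i : Fin N // k ≤ (i : ℕ)}, ⟪x i.1 (6 * (n : ℝ) * τ), v⟫))
    (max (⨆ p : {j : Fin M // (j : ℕ) < h} × (Icc ((6 * (n : ℝ) - 1) * τ) (6 * (n : ℝ) * τ)),
            ⟪y p.1.1 (p.2 : ℝ), v⟫)
         (⨆ j : {j : Fin M // h ≤ (j : ℕ)}, ⟪y j.1 (6 * (n : ℝ) * τ), v⟫))


/-!
Fix a direction `v` and follow the projections `⟪v, z_α(t)⟫` of all agents. Each one satisfies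
a scalar delayed equation whose right-hand side is a nonnegative combination, with total weight at
most `Λ`, of differences `⟪v, z_β(t - delay)⟫ - ⟪v, z_α(t)⟫`; a Grönwall argument on
`exp (Λ t) (K - ⟪v, z_α⟫)` yields both a maximum principle (an upper bound on a window of length `τ`
persists) and a quantitative pull: an agent listening, with weight at least `γ`, to a source that
stays `δ` below the bound `K` ends up `γ / Λ (1 - e^{-Λτ}) δ` below it. The maximum principle
bounds the trajectory, hence all weights are at least `γ > 0` along it. Now if the projections lie
in `[m, K]`, some agent is at distance at least `(K - m) / 2` from one end; this gap spreads
within its population, then through the delayed leader links to the leaders of the other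
population, then to the rest of it, so after `6τ` the interval `[m, K]` shrinks by a fixed factor.
Iterating, and projecting on the direction of `z_α - z_β`, the diameter decays geometrically.
-/

theorem sum_mul_sub_le_of_le {ι : Type*} {s : Finset ι} {w u δ : ι → ℝ} {Λ K a : ℝ}
    (hw : ∀ β ∈ s, 0 ≤ w β) (hΛ : ∑ β ∈ s, w β ≤ Λ) (ha : a ≤ K)
    (hu : ∀ β ∈ s, u β ≤ K - δ β) :
    ∑ β ∈ s, w β * (u β - a) ≤ Λ * (K - a) - ∑ β ∈ s, w β * δ β :=
  calc ∑ β ∈ s, w β * (u β - a) ≤ ∑ β ∈ s, (w β * (K - a) - w β * δ β) :=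
        Finset.sum_le_sum fun β hβ => by nlinarith [hw β hβ, hu β hβ]
    _ = (∑ β ∈ s, w β) * (K - a) - ∑ β ∈ s, w β * δ β := by
        rw [Finset.sum_sub_distrib, Finset.sum_mul]
    _ ≤ Λ * (K - a) - ∑ β ∈ s, w β * δ β := by gcongr

theorem exp_mul_le_of_hasDerivAt {g g' : ℝ → ℝ} {Λ a b : ℝ} (hab : a ≤ b)
    (hg : ContinuousOn g (Icc a b)) (hderiv : ∀ t ∈ Ioo a b, HasDerivAt g (g' t) t)
    (hineq : ∀ t ∈ Ioo a b, -Λ * g t ≤ g' t) :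
    exp (-Λ * (b - a)) * g a ≤ g b := by
  have hmono : MonotoneOn (fun t => exp (Λ * t) * g t) (Icc a b) := by
    refine monotoneOn_of_hasDerivWithinAt_nonneg (convex_Icc a b)
      ((continuous_const.mul continuous_id).rexp.continuousOn.mul hg)
      (f' := fun t => exp (Λ * t) * (Λ * g t + g' t)) (fun t ht => ?_) fun t ht => ?_ <;>
      rw [interior_Icc] at ht
    · rw [interior_Icc]
      refine HasDerivAt.hasDerivWithinAt ?_
      refine (((hasDerivAt_id t).const_mul Λ).exp.mul (hderiv t ht)).congr_deriv ?_
      simp only [id]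
      ring
    · exact mul_nonneg (exp_pos _).le (by linarith [hineq t ht])
  calc exp (-Λ * (b - a)) * g a = exp (-(Λ * b)) * (exp (Λ * a) * g a) := by
        rw [← mul_assoc, ← exp_add]; ring_nf
    _ ≤ exp (-(Λ * b)) * (exp (Λ * b) * g b) :=
        mul_le_mul_of_nonneg_left (hmono (left_mem_Icc.2 hab) (right_mem_Icc.2 hab) hab)
          (exp_pos _).le
    _ = g b := by rw [← mul_assoc, ← exp_add]; simp

theorem sum_div_le_of_card_le {ι : Type*} {s : Finset ι} {f : ι → ℝ} {D Λ : ℝ}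
    (hD : (s.card : ℝ) ≤ D) (hf : ∀ i ∈ s, f i ≤ Λ) (hΛ : 0 ≤ Λ) : ∑ i ∈ s, f i / D ≤ Λ := by
  rw [← Finset.sum_div]
  refine div_le_of_le_mul₀ ((Nat.cast_nonneg _).trans hD) hΛ
    ((Finset.sum_le_card_nsmul s f Λ hf).trans ?_)
  rw [nsmul_eq_mul, mul_comm]
  gcongr

theorem exists_norm_le_on_Icc {ι E : Type*} [Finite ι] [SeminormedAddCommGroup E]
    {z : ι → ℝ → E} (hz : ∀ α, Continuous (z α)) (a b : ℝ) :
    ∃ B, ∀ α, ∀ s ∈ Icc a b, ‖z α s‖ ≤ B := by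
  choose C hC using fun α => isCompact_Icc.exists_bound_of_continuousOn (hz α).continuousOn
  obtain ⟨B, hB⟩ := Finite.exists_le C
  exact ⟨B, fun α s hs => (hC α s hs).trans (hB α)⟩

theorem max_iSup_norm_sub_le_iSup {N M E : Type*} [Finite N] [Finite M]
    [SeminormedAddCommGroup E] (x : N → ℝ → E) (y : M → ℝ → E) (t : ℝ) :
    max (max (⨆ p : N × N, ‖x p.1 t - x p.2 t‖) (⨆ p : M × M, ‖y p.1 t - y p.2 t‖))
        (⨆ p : N × M, ‖x p.1 t - y p.2 t‖) ≤
      ⨆ p : (N ⊕ M) × (N ⊕ M), ‖Sum.elim x y p.1 t - Sum.elim x y p.2 t‖ := by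
  have hbdd : BddAbove (range fun p : (N ⊕ M) × (N ⊕ M) =>
      ‖Sum.elim x y p.1 t - Sum.elim x y p.2 t‖) := (finite_range _).bddAbove
  have h0 := Real.iSup_nonneg fun p : (N ⊕ M) × (N ⊕ M) =>
    norm_nonneg (Sum.elim x y p.1 t - Sum.elim x y p.2 t)
  refine max_le (max_le ?_ ?_) ?_ <;> refine Real.iSup_le (fun p => ?_) h0
  exacts [le_ciSup hbdd (.inl p.1, .inl p.2), le_ciSup hbdd (.inr p.1, .inr p.2),
    le_ciSup hbdd (.inl p.1, .inr p.2)]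

-- the gain of a pull over a window of length `τ` (see `proj_le_sub_pullRate`)
def pullRate (τ Λ γ : ℝ) : ℝ := γ / Λ * (1 - exp (-Λ * τ))

theorem pullRate_pos {τ Λ γ : ℝ} (hτ : 0 < τ) (hγ : 0 < γ) (hΛ : 0 < Λ) :
    0 < pullRate τ Λ γ :=
  mul_pos (div_pos hγ hΛ) (sub_pos.2 (exp_lt_one_iff.2 (by nlinarith)))

theorem pullRate_nonneg {τ Λ γ : ℝ} (hτ : 0 ≤ τ) (hγ : 0 ≤ γ) (hΛ : 0 ≤ Λ) :
    0 ≤ pullRate τ Λ γ :=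
  mul_nonneg (div_nonneg hγ hΛ) (sub_nonneg.2 (exp_le_one_iff.2 (by nlinarith)))

theorem pullRate_le_one {τ Λ γ : ℝ} (hτ : 0 ≤ τ) (hγ : 0 ≤ γ) (hγΛ : γ ≤ Λ) :
    pullRate τ Λ γ ≤ 1 :=
  mul_le_one₀ (div_le_one_of_le₀ hγΛ (hγ.trans hγΛ))
    (sub_nonneg.2 (exp_le_one_iff.2 (by nlinarith))) (by linarith [exp_pos (-Λ * τ)])

-- one decay over a window of length `6τ` followed by three pulls
def gapRate (τ Λ γ : ℝ) : ℝ := pullRate τ Λ γ ^ 3 * exp (-Λ * (6 * τ))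

theorem gapRate_pos {τ Λ γ : ℝ} (hτ : 0 < τ) (hγ : 0 < γ) (hΛ : 0 < Λ) : 0 < gapRate τ Λ γ :=
  mul_pos (pow_pos (pullRate_pos hτ hγ hΛ) 3) (exp_pos _)

theorem gapRate_le_one {τ Λ γ : ℝ} (hτ : 0 ≤ τ) (hγ : 0 ≤ γ) (hγΛ : γ ≤ Λ) :
    gapRate τ Λ γ ≤ 1 :=
  mul_le_one₀ (pow_le_one₀ (pullRate_nonneg hτ hγ (hγ.trans hγΛ)) (pullRate_le_one hτ hγ hγΛ))
    (exp_pos _).le (exp_le_one_iff.2 (by nlinarith))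

-- The weights are given functions of time: a nonlinear system such as the HK system becomes one
-- of these networks once its weights are evaluated along a solution.
structure DelayedNetwork (ι E : Type*) [NormedAddCommGroup E] [NormedSpace ℝ E] (τ Λ : ℝ) where
  z : ι → ℝ → E
  src : ι → Finset ι
  delay : ι → ι → ℝ
  weight : ι → ι → ℝ → ℝ
  continuous_z : ∀ α, Continuous (z α)
  delay_mem : ∀ α β, delay α β ∈ Icc 0 τ
  weight_nonneg : ∀ α β t, 0 ≤ weight α β t
  sum_weight_le : ∀ α t, ∑ β ∈ src α, weight α β t ≤ Λ
  hasDerivAt_z : ∀ α t, 0 < t →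
    HasDerivAt (z α) (∑ β ∈ src α, weight α β t • (z β (t - delay α β) - z α t)) t

namespace DelayedNetwork

variable {ι E : Type*} [NormedAddCommGroup E] [InnerProductSpace ℝ E] {τ Λ : ℝ}
  (P : DelayedNetwork ι E τ Λ)

def proj (v : E) (α : ι) (t : ℝ) : ℝ := ⟪v, P.z α t⟫

theorem tau_nonneg (P : DelayedNetwork ι E τ Λ) (α : ι) : 0 ≤ τ :=
  (P.delay_mem α α).1.trans (P.delay_mem α α).2

theorem continuous_proj (v : E) (α : ι) : Continuous (P.proj v α) :=
  continuous_const.inner (P.continuous_z α)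

theorem proj_neg (v : E) (α : ι) (t : ℝ) : P.proj (-v) α t = -P.proj v α t :=
  inner_neg_left _ _

theorem hasDerivAt_proj (v : E) (α : ι) {t : ℝ} (ht : 0 < t) :
    HasDerivAt (P.proj v α)
      (∑ β ∈ P.src α, P.weight α β t * (P.proj v β (t - P.delay α β) - P.proj v α t)) t := by
  refine ((hasDerivAt_const t v).inner ℝ (P.hasDerivAt_z α t ht)).congr_deriv ?_
  simp [proj, inner_sum, inner_smul_right, inner_sub_right]

variable {P} {v : E} {α : ι} {a b K : ℝ}

theorem exp_mul_le_sub_proj (hΛ : 0 < Λ) (ha : 0 ≤ a) (hab : a ≤ b) {c : ℝ} {δ : ι → ℝ}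
    (hsrc : ∀ s ∈ Ioo a b, ∀ β ∈ P.src α, P.proj v β (s - P.delay α β) ≤ K - δ β)
    (hα : ∀ s ∈ Ioo a b, P.proj v α s ≤ K)
    (hc : ∀ s ∈ Ioo a b, c ≤ ∑ β ∈ P.src α, P.weight α β s * δ β) :
    exp (-Λ * (b - a)) * (K - c / Λ - P.proj v α a) ≤ K - c / Λ - P.proj v α b := by
  refine exp_mul_le_of_hasDerivAt (g := fun s => K - c / Λ - P.proj v α s) hab
    (continuousOn_const.sub (P.continuous_proj v α).continuousOn)
    (fun s hs => (P.hasDerivAt_proj v α (ha.trans_lt hs.1)).const_sub _) fun s hs => ?_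
  have hsum := sum_mul_sub_le_of_le (fun β _ => P.weight_nonneg α β s) (P.sum_weight_le α s)
    (hα s hs) (hsrc s hs)
  have hcΛ : -Λ * (K - c / Λ - P.proj v α s) = c - Λ * (K - P.proj v α s) := by
    field_simp
    ring
  linarith [hc s hs]

theorem proj_le_of_window [Finite ι] (hΛ : 0 < Λ) (ha : 0 ≤ a)
    (hwin : ∀ β, ∀ s ∈ Icc (a - τ) a, P.proj v β s ≤ K) {t : ℝ} (ht : a ≤ t) :
    P.proj v α t ≤ K := by
  refine le_of_forall_pos_le_add fun ε hε => ?_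
  by_contra! hlt
  -- `ts` is the first time at which some projection reaches `K + ε`
  let S : Set ℝ := Icc a t ∩ ⋃ β, {s | K + ε ≤ P.proj v β s}
  have hSc : IsClosed S := isClosed_Icc.inter
    (isClosed_iUnion_of_finite fun β => isClosed_le continuous_const (P.continuous_proj v β))
  have htS : t ∈ S := ⟨right_mem_Icc.2 ht, mem_iUnion.2 ⟨α, hlt.le⟩⟩
  have hSbdd : BddBelow S := ⟨a, fun s hs => hs.1.1⟩
  obtain ⟨⟨hats, -⟩, hts⟩ := hSc.csInf_mem ⟨t, htS⟩ hSbdd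
  obtain ⟨β₀, hβ₀ : K + ε ≤ P.proj v β₀ (sInf S)⟩ := mem_iUnion.1 hts
  set ts := sInf S
  have hτ := P.tau_nonneg α
  have hbelow : ∀ β s, a - τ ≤ s → s < ts → P.proj v β s ≤ K + ε := by
    intro β s hs hsts
    rcases lt_or_ge s a with hsa | hsa
    · linarith [hwin β s ⟨hs, hsa.le⟩]
    · by_contra! hβ
      exact (csInf_le hSbdd ⟨⟨hsa, hsts.le.trans (csInf_le hSbdd htS)⟩,
        mem_iUnion.2 ⟨β, hβ.le⟩⟩).not_gt hsts
  have hgron := exp_mul_le_sub_proj (P := P) (α := β₀) (c := 0) (δ := 0) (K := K + ε) hΛ ha hats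
    (fun s hs β _ => by
      simpa using hbelow β _ (by linarith [(P.delay_mem β₀ β).2, hs.1])
        (by linarith [(P.delay_mem β₀ β).1, hs.2]))
    (fun s hs => hbelow β₀ s (by linarith [hs.1]) hs.2) (fun s _ => by simp)
  have hpos : 0 < exp (-Λ * (ts - a)) * (K + ε - P.proj v β₀ a) :=
    mul_pos (exp_pos _) (by linarith [hwin β₀ a ⟨by linarith, le_rfl⟩])
  simp only [zero_div, sub_zero] at hgron
  linarith

theorem norm_le_of_window [Finite ι] (hΛ : 0 < Λ) (ha : 0 ≤ a) {B : ℝ}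
    (hwin : ∀ β, ∀ s ∈ Icc (a - τ) a, ‖P.z β s‖ ≤ B) {t : ℝ} (ht : a - τ ≤ t) :
    ‖P.z α t‖ ≤ B := by
  rcases le_or_gt t a with hta | hta
  · exact hwin α t ⟨ht, hta⟩
  have hB : 0 ≤ B := (norm_nonneg _).trans (hwin α a ⟨by linarith [P.tau_nonneg α], le_rfl⟩)
  have hsq : ‖P.z α t‖ ^ 2 ≤ B * ‖P.z α t‖ := by
    rw [← real_inner_self_eq_norm_sq]
    refine P.proj_le_of_window (v := P.z α t) hΛ ha (fun β s hs => ?_) hta.le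
    exact (real_inner_le_norm _ _).trans (by rw [mul_comm]; gcongr; exact hwin β s hs)
  nlinarith [norm_nonneg (P.z α t)]

theorem exp_mul_sub_proj_le (hΛ : 0 < Λ) (ha : 0 ≤ a) (hab : a ≤ b)
    (hup : ∀ β s, a - τ ≤ s → s ≤ b → P.proj v β s ≤ K) :
    exp (-Λ * (b - a)) * (K - P.proj v α a) ≤ K - P.proj v α b := by
  have := exp_mul_le_sub_proj (P := P) (c := 0) (δ := 0) hΛ ha hab
    (fun s hs β _ => by
      simpa using hup β _ (by linarith [(P.delay_mem α β).2, hs.1])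
        (by linarith [(P.delay_mem α β).1, hs.2]))
    (fun s hs => hup α s (by linarith [P.tau_nonneg α, hs.1]) hs.2.le) (fun s _ => by simp)
  simpa using this

theorem proj_le_sub_pullRate (hΛ : 0 < Λ) (hb : τ ≤ b) {σ : ι} (hσ : σ ∈ P.src α) {γ δ : ℝ}
    (hδ : 0 ≤ δ) (hup : ∀ β s, b - 2 * τ ≤ s → s ≤ b → P.proj v β s ≤ K)
    (hw : ∀ s ∈ Ioo (b - τ) b, γ ≤ P.weight α σ s)
    (hσK : ∀ s ∈ Ioo (b - τ) b, P.proj v σ (s - P.delay α σ) ≤ K - δ) :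
    P.proj v α b ≤ K - pullRate τ Λ γ * δ := by
  classical
  have hτ := P.tau_nonneg α
  have key := exp_mul_le_sub_proj (P := P) (c := γ * δ) (δ := fun β => if β = σ then δ else 0)
    hΛ (by linarith) (by linarith : b - τ ≤ b)
    (fun s hs β hβ => by
      split_ifs with hβσ
      · exact hβσ ▸ hσK s hs
      · rw [sub_zero]
        exact hup β _ (by linarith [(P.delay_mem α β).2, hs.1])
          (by linarith [(P.delay_mem α β).1, hs.2]))
    (fun s hs => hup α s (by linarith [hs.1]) hs.2.le)
    (fun s hs => by
      simp only [mul_ite, mul_zero, Finset.sum_ite_eq', if_pos hσ]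
      exact mul_le_mul_of_nonneg_right (hw s hs) hδ)
  rw [show b - (b - τ) = τ by ring] at key
  have hα : 0 ≤ exp (-Λ * τ) * (K - P.proj v α (b - τ)) :=
    mul_nonneg (exp_pos _).le (by linarith [hup α (b - τ) (by linarith) (by linarith)])
  have hρ : pullRate τ Λ γ * δ = γ * δ / Λ - exp (-Λ * τ) * (γ * δ / Λ) := by
    unfold pullRate; ring
  linarith

structure IsTwoPopulation (P : DelayedNetwork ι E τ Λ) (pop : ι → Bool) (IsLeader : ι → Prop)
    (γ : ℝ) : Prop where
  mem_src_of_pop_eq : ∀ α β, pop α = pop β → α ≠ β → β ∈ P.src α ∧ P.delay α β = 0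
  mem_src_of_isLeader : ∀ α β, IsLeader α → IsLeader β → pop α ≠ pop β → β ∈ P.src α
  exists_isLeader : ∀ b, ∃ α, pop α = b ∧ IsLeader α
  le_weight : ∀ α β t, β ∈ P.src α → 0 < t → γ ≤ P.weight α β t

namespace IsTwoPopulation

variable {pop : ι → Bool} {IsLeader : ι → Prop} {γ δ : ℝ}

theorem nonempty (hP : P.IsTwoPopulation pop IsLeader γ) : Nonempty ι :=
  ⟨(hP.exists_isLeader true).choose⟩

theorem γ_le_Λ (hP : P.IsTwoPopulation pop IsLeader γ) : γ ≤ Λ := by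
  obtain ⟨α, hα, hlα⟩ := hP.exists_isLeader true
  obtain ⟨β, hβ, hlβ⟩ := hP.exists_isLeader false
  have hmem := hP.mem_src_of_isLeader α β hlα hlβ (by simp [hα, hβ])
  calc γ ≤ P.weight α β 1 := hP.le_weight α β 1 hmem one_pos
    _ ≤ ∑ β' ∈ P.src α, P.weight α β' 1 :=
        Finset.single_le_sum (fun β' _ => P.weight_nonneg α β' 1) hmem
    _ ≤ Λ := P.sum_weight_le α 1

theorem proj_le_sub_pullRate_of_pop_eq (hP : P.IsTwoPopulation pop IsLeader γ) (hγ : 0 < γ)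
    (hτ : 0 < τ) (ha : 0 ≤ a) (hup : ∀ β s, a ≤ s → P.proj v β s ≤ K) (hδ : 0 ≤ δ) {α σ : ι}
    (hpop : pop α = pop σ) {t : ℝ} (ht : a + 2 * τ ≤ t)
    (hσ : ∀ s ∈ Icc (t - τ) t, P.proj v σ s ≤ K - δ) :
    P.proj v α t ≤ K - pullRate τ Λ γ * δ := by
  by_cases hασ : α = σ
  · subst hασ
    have hρ := pullRate_le_one hτ.le hγ.le hP.γ_le_Λ
    nlinarith [hσ t ⟨by linarith, le_rfl⟩]
  obtain ⟨hmem, hdelay⟩ := hP.mem_src_of_pop_eq α σ hpop hασ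
  refine proj_le_sub_pullRate (hγ.trans_le hP.γ_le_Λ) (by linarith) hmem hδ
    (fun β s hs _ => hup β s (by linarith))
    (fun s hs => hP.le_weight α σ s hmem (by linarith [hs.1])) fun s hs => ?_
  rw [hdelay, sub_zero]
  exact hσ s (Ioo_subset_Icc_self hs)

theorem proj_le_sub_pullRate_of_isLeader (hP : P.IsTwoPopulation pop IsLeader γ) (hγ : 0 < γ)
    (hτ : 0 < τ) (ha : 0 ≤ a) (hup : ∀ β s, a ≤ s → P.proj v β s ≤ K) (hδ : 0 ≤ δ) {α σ : ι}
    (hα : IsLeader α) (hσ : IsLeader σ) (hpop : pop α ≠ pop σ) {t : ℝ} (ht : a + 2 * τ ≤ t)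
    (hσK : ∀ s ∈ Icc (t - 2 * τ) t, P.proj v σ s ≤ K - δ) :
    P.proj v α t ≤ K - pullRate τ Λ γ * δ := by
  have hmem := hP.mem_src_of_isLeader α σ hα hσ hpop
  exact proj_le_sub_pullRate (hγ.trans_le hP.γ_le_Λ) (by linarith) hmem hδ
    (fun β s hs _ => hup β s (by linarith))
    (fun s hs => hP.le_weight α σ s hmem (by linarith [hs.1])) fun s hs =>
      hσK _ ⟨by linarith [(P.delay_mem α σ).2, hs.1], by linarith [(P.delay_mem α σ).1, hs.2]⟩

theorem proj_le_sub_gapRate_of_mem_Icc (hP : P.IsTwoPopulation pop IsLeader γ) (hγ : 0 < γ)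
    (hτ : 0 < τ) (ha : 0 ≤ a) (hup : ∀ β s, a ≤ s → P.proj v β s ≤ K) (hδ : 0 ≤ δ) {α₀ : ι}
    (hα₀ : P.proj v α₀ (a + τ) ≤ K - δ) (α : ι) {t : ℝ} (ht : t ∈ Icc (a + 5 * τ) (a + 7 * τ)) :
    P.proj v α t ≤ K - gapRate τ Λ γ * δ := by
  have hΛ := hγ.trans_le hP.γ_le_Λ
  set ρ := pullRate τ Λ γ
  set e := exp (-Λ * (6 * τ))
  have hρ0 := pullRate_nonneg hτ.le hγ.le hΛ.le
  have hρ1 := pullRate_le_one hτ.le hγ.le hP.γ_le_Λ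
  have he0 : 0 ≤ e * δ := mul_nonneg (exp_pos _).le hδ
  have phase0 : ∀ s ∈ Icc (a + τ) (a + 7 * τ), P.proj v α₀ s ≤ K - e * δ := by
    intro s hs
    have hdec := exp_mul_sub_proj_le (α := α₀) hΛ (by linarith) hs.1 fun β s' h _ =>
      hup β s' (by linarith)
    have he : e ≤ exp (-Λ * (s - (a + τ))) := exp_le_exp.2 (by nlinarith [hs.2])
    nlinarith [mul_le_mul he (by linarith : δ ≤ K - P.proj v α₀ (a + τ)) hδ (exp_pos _).le]
  have phase1 : ∀ β, pop β = pop α₀ → ∀ s ∈ Icc (a + 2 * τ) (a + 7 * τ),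
      P.proj v β s ≤ K - ρ * (e * δ) := fun β hβ s hs =>
    hP.proj_le_sub_pullRate_of_pop_eq hγ hτ ha hup he0 hβ hs.1 fun s' hs' =>
      phase0 s' ⟨by linarith [hs'.1, hs.1], hs'.2.trans hs.2⟩
  obtain ⟨α₁, hα₁, hlα₁⟩ := hP.exists_isLeader (pop α₀)
  have phase2 : ∀ β, IsLeader β → pop β ≠ pop α₀ → ∀ s ∈ Icc (a + 4 * τ) (a + 7 * τ),
      P.proj v β s ≤ K - ρ * (ρ * (e * δ)) := fun β hβ hpop s hs =>
    hP.proj_le_sub_pullRate_of_isLeader hγ hτ ha hup (mul_nonneg hρ0 he0) hβ hlα₁ (by rwa [hα₁])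
      (by linarith [hs.1]) fun s' hs' =>
        phase1 α₁ hα₁ s' ⟨by linarith [hs'.1, hs.1], hs'.2.trans hs.2⟩
  have hrate : gapRate τ Λ γ * δ = ρ * (ρ * (ρ * (e * δ))) := by unfold gapRate; ring
  rw [hrate]
  by_cases hpop : pop α = pop α₀
  · have hle := (mul_le_of_le_one_left (mul_nonneg hρ0 (mul_nonneg hρ0 he0)) hρ1).trans
      (mul_le_of_le_one_left (mul_nonneg hρ0 he0) hρ1)
    linarith [phase1 α hpop t ⟨by linarith [ht.1], ht.2⟩]
  · obtain ⟨β₁, hβ₁, hlβ₁⟩ := hP.exists_isLeader (pop α)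
    exact hP.proj_le_sub_pullRate_of_pop_eq hγ hτ ha hup (mul_nonneg hρ0 (mul_nonneg hρ0 he0))
      hβ₁.symm (by linarith [ht.1]) fun s hs =>
        phase2 β₁ hlβ₁ (by rwa [hβ₁]) s ⟨by linarith [hs.1, ht.1], hs.2.trans ht.2⟩

theorem proj_le_sub_gapRate [Finite ι] (hP : P.IsTwoPopulation pop IsLeader γ) (hγ : 0 < γ)
    (hτ : 0 < τ) (ha : 0 ≤ a) (hup : ∀ β s, a ≤ s → P.proj v β s ≤ K) (hδ : 0 ≤ δ) {α₀ : ι}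
    (hα₀ : P.proj v α₀ (a + τ) ≤ K - δ) (α : ι) {t : ℝ} (ht : a + 5 * τ ≤ t) :
    P.proj v α t ≤ K - gapRate τ Λ γ * δ := by
  rcases le_or_gt t (a + 7 * τ) with h | h
  · exact hP.proj_le_sub_gapRate_of_mem_Icc hγ hτ ha hup hδ hα₀ α ⟨ht, h⟩
  · exact proj_le_of_window (hγ.trans_le hP.γ_le_Λ) (by positivity) (fun β s hs =>
      hP.proj_le_sub_gapRate_of_mem_Icc hγ hτ ha hup hδ hα₀ β ⟨by linarith [hs.1], hs.2⟩) h.le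

theorem exists_proj_mem_Icc_contract [Finite ι] (hP : P.IsTwoPopulation pop IsLeader γ)
    (hγ : 0 < γ) (hτ : 0 < τ) {m : ℝ} (ha : 0 ≤ a)
    (hmK : ∀ α t, a ≤ t → P.proj v α t ∈ Icc m K) :
    ∃ m' K', K' - m' ≤ (1 - gapRate τ Λ γ / 2) * (K - m) ∧
      ∀ α t, a + 6 * τ ≤ t → P.proj v α t ∈ Icc m' K' := by
  obtain ⟨α₀⟩ := hP.nonempty
  have hD : 0 ≤ (K - m) / 2 := by linarith [(hmK α₀ a le_rfl).1, (hmK α₀ a le_rfl).2]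
  rcases le_total (P.proj v α₀ (a + τ)) ((K + m) / 2) with hlow | hhigh
  · refine ⟨m, K - gapRate τ Λ γ * ((K - m) / 2), le_of_eq (by ring),
      fun α t ht => ⟨(hmK α t (by linarith)).1, ?_⟩⟩
    exact hP.proj_le_sub_gapRate hγ hτ ha (fun β s hs => (hmK β s hs).2) hD (α₀ := α₀)
      (by linarith) α (by linarith)
  · refine ⟨m + gapRate τ Λ γ * ((K - m) / 2), K, le_of_eq (by ring),
      fun α t ht => ⟨?_, (hmK α t (by linarith)).2⟩⟩
    have := hP.proj_le_sub_gapRate (v := -v) (K := -m) hγ hτ ha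
      (fun β s hs => by rw [proj_neg]; linarith [(hmK β s hs).1]) hD (α₀ := α₀)
      (by rw [proj_neg]; linarith) α (t := t) (by linarith)
    rw [proj_neg] at this
    linarith

theorem exists_proj_mem_Icc_pow [Finite ι] (hP : P.IsTwoPopulation pop IsLeader γ)
    (hγ : 0 < γ) (hτ : 0 < τ) {m : ℝ} (h0 : ∀ α t, 0 ≤ t → P.proj v α t ∈ Icc m K) (n : ℕ) :
    ∃ m' K', K' - m' ≤ (1 - gapRate τ Λ γ / 2) ^ n * (K - m) ∧
      ∀ α t, 6 * n * τ ≤ t → P.proj v α t ∈ Icc m' K' := by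
  induction n with
  | zero => exact ⟨m, K, by simp, by simpa using h0⟩
  | succ n ih =>
    obtain ⟨m', K', hlen, hmem⟩ := ih
    obtain ⟨m'', K'', hlen', hmem'⟩ := hP.exists_proj_mem_Icc_contract hγ hτ (by positivity) hmem
    have hq : 0 ≤ 1 - gapRate τ Λ γ / 2 := by linarith [gapRate_le_one hτ.le hγ.le hP.γ_le_Λ]
    refine ⟨m'', K'', ?_, fun α t ht => hmem' α t (by push_cast at ht; linarith)⟩
    calc K'' - m'' ≤ (1 - gapRate τ Λ γ / 2) * (K' - m') := hlen'
      _ ≤ (1 - gapRate τ Λ γ / 2) * ((1 - gapRate τ Λ γ / 2) ^ n * (K - m)) :=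
          mul_le_mul_of_nonneg_left hlen hq
      _ = (1 - gapRate τ Λ γ / 2) ^ (n + 1) * (K - m) := by ring

theorem norm_sub_le_pow [Finite ι] (hP : P.IsTwoPopulation pop IsLeader γ) (hγ : 0 < γ)
    (hτ : 0 < τ) {B : ℝ} (hB : ∀ α t, 0 ≤ t → ‖P.z α t‖ ≤ B) (n : ℕ) {t : ℝ}
    (ht : 6 * n * τ ≤ t) (α β : ι) :
    ‖P.z α t - P.z β t‖ ≤ (1 - gapRate τ Λ γ / 2) ^ n * (2 * B) := by
  set w := P.z α t - P.z β t
  have hinit : ∀ α' s, 0 ≤ s → P.proj w α' s ∈ Icc (-(‖w‖ * B)) (‖w‖ * B) := fun α' s hs =>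
    abs_le.1 ((abs_real_inner_le_norm _ _).trans (by gcongr; exact hB α' s hs))
  obtain ⟨m, K, hlen, hmem⟩ := hP.exists_proj_mem_Icc_pow hγ hτ hinit n
  have hsq : ‖w‖ ^ 2 ≤ K - m := by
    have hα : ⟪w, P.z α t⟫ ≤ K := (hmem α t ht).2
    have hβ : m ≤ ⟪w, P.z β t⟫ := (hmem β t ht).1
    rw [← real_inner_self_eq_norm_sq, inner_sub_right]
    linarith
  have hq : 0 ≤ (1 - gapRate τ Λ γ / 2) ^ n :=
    pow_nonneg (by linarith [gapRate_le_one hτ.le hγ.le hP.γ_le_Λ]) n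
  have hB0 : 0 ≤ B := (norm_nonneg _).trans (hB α 0 le_rfl)
  rcases (norm_nonneg w).eq_or_lt with hw | hw
  · rw [← hw]
    positivity
  · refine le_of_mul_le_mul_left ?_ hw
    nlinarith

theorem tendsto_iSup_norm_sub [Finite ι] (hP : P.IsTwoPopulation pop IsLeader γ) (hγ : 0 < γ)
    (hτ : 0 < τ) {B : ℝ} (hB : ∀ α t, 0 ≤ t → ‖P.z α t‖ ≤ B) :
    Tendsto (fun t => ⨆ p : ι × ι, ‖P.z p.1 t - P.z p.2 t‖) atTop (𝓝 0) := by
  obtain ⟨α₀⟩ := hP.nonempty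
  have hB0 : 0 ≤ B := (norm_nonneg _).trans (hB α₀ 0 le_rfl)
  have hκ := gapRate_pos hτ hγ (hγ.trans_le hP.γ_le_Λ)
  have hκ1 := gapRate_le_one hτ.le hγ.le hP.γ_le_Λ
  have hpow : Tendsto (fun n : ℕ => (1 - gapRate τ Λ γ / 2) ^ n * (2 * B)) atTop (𝓝 0) := by
    simpa using (tendsto_pow_atTop_nhds_zero_of_lt_one (by linarith) (by linarith)).mul_const
      (2 * B)
  refine tendsto_order.2 ⟨fun ε hε => Eventually.of_forall fun t =>
    hε.trans_le (Real.iSup_nonneg fun _ => norm_nonneg _), fun ε hε => ?_⟩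
  obtain ⟨n, hn⟩ := (hpow.eventually (gt_mem_nhds hε)).exists
  filter_upwards [eventually_ge_atTop (6 * n * τ)] with t ht
  refine (Real.iSup_le (fun p : ι × ι => hP.norm_sub_le_pow hγ hτ hB n ht p.1 p.2) ?_).trans_lt hn
  have : 0 ≤ 1 - gapRate τ Λ γ / 2 := by linarith
  positivity

end IsTwoPopulation

end DelayedNetwork

section Admissible

variable {d : ℕ} {ι : Type*} {f : ι → EuclideanSpace ℝ (Fin d) → EuclideanSpace ℝ (Fin d) → ℝ}

theorem exists_forall_mem_Icc_of_admissible [Finite ι] (hf : ∀ i, Admissible (f i)) :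
    ∃ Λ, ∀ i z₁ z₂, f i z₁ z₂ ∈ Icc 0 Λ := by
  choose U hU using fun i => (hf i).2.2
  obtain ⟨Λ, hΛ⟩ := Finite.exists_le U
  exact ⟨Λ, fun i z₁ z₂ => ⟨((hf i).2.1 z₁ z₂).le, (hU i ⟨(z₁, z₂), rfl⟩).trans (hΛ i)⟩⟩

theorem exists_pos_le_of_admissible [Fintype ι] [Nonempty ι] (hf : ∀ i, Admissible (f i))
    (B : ℝ) : ∃ Γ > 0, ∀ i z₁ z₂, ‖z₁‖ ≤ B → ‖z₂‖ ≤ B → Γ ≤ f i z₁ z₂ := by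
  choose Γ hΓ0 hΓ using fun i =>
    ((isCompact_closedBall 0 B).prod (isCompact_closedBall 0 B)).exists_forall_le'
      (hf i).1.continuousOn fun p _ => (hf i).2.1 p.1 p.2
  refine ⟨Finset.univ.inf' Finset.univ_nonempty Γ, (Finset.lt_inf'_iff _).2 fun i _ => hΓ0 i,
    fun i z₁ z₂ h₁ h₂ => (Finset.inf'_le _ (Finset.mem_univ i)).trans (hΓ i (z₁, z₂) ?_)⟩
  simp [h₁, h₂]

end Admissible

-- Both populations form one network indexed by `Fin N ⊕ Fin M`, `inl` being the `x`-agents;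
-- `Sum.isLeft` labels the population.
namespace TwoPopHK

variable {d N M : ℕ} (h k : ℕ)

def IsLeader : Fin N ⊕ Fin M → Prop := Sum.elim (fun i => (i : ℕ) < k) (fun j => (j : ℕ) < h)

def den : Fin N ⊕ Fin M → ℝ
  | .inl i => if (i : ℕ) < k then (N : ℝ) + h - 1 else (N : ℝ) - 1
  | .inr j => if (j : ℕ) < h then (M : ℝ) + k - 1 else (M : ℝ) - 1

def src : Fin N ⊕ Fin M → Finset (Fin N ⊕ Fin M)
  | .inl i => (Finset.univ.erase i).disjSum
      (if (i : ℕ) < k then Finset.univ.filter (fun j : Fin M => (j : ℕ) < h) else ∅)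
  | .inr j => (if (j : ℕ) < h then Finset.univ.filter (fun i : Fin N => (i : ℕ) < k) else ∅).disjSum
      (Finset.univ.erase j)

def delay (τ : ℝ) (α β : Fin N ⊕ Fin M) : ℝ := if α.isLeft = β.isLeft then 0 else τ

def influence (ψ ψs φ φs : EuclideanSpace ℝ (Fin d) → EuclideanSpace ℝ (Fin d) → ℝ) :
    Bool × Bool → EuclideanSpace ℝ (Fin d) → EuclideanSpace ℝ (Fin d) → ℝ
  | (true, true) => ψ
  | (true, false) => φ
  | (false, true) => φs
  | (false, false) => ψs

def weight (τ : ℝ) (ψ ψs φ φs : EuclideanSpace ℝ (Fin d) → EuclideanSpace ℝ (Fin d) → ℝ)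
    (x : Fin N → ℝ → EuclideanSpace ℝ (Fin d)) (y : Fin M → ℝ → EuclideanSpace ℝ (Fin d))
    (α β : Fin N ⊕ Fin M) (t : ℝ) : ℝ :=
  influence ψ ψs φ φs (α.isLeft, β.isLeft) (Sum.elim x y α t) (Sum.elim x y β (t - delay τ α β)) /
    den h k α

theorem den_nonneg (α : Fin N ⊕ Fin M) : 0 ≤ den h k α := by
  rcases α with i | j
  · have : (1 : ℝ) ≤ N := by exact_mod_cast i.pos
    simp only [den]
    split_ifs <;> linarith [(h.cast_nonneg : (0 : ℝ) ≤ h)]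
  · have : (1 : ℝ) ≤ M := by exact_mod_cast j.pos
    simp only [den]
    split_ifs <;> linarith [(k.cast_nonneg : (0 : ℝ) ≤ k)]

theorem card_src_le (α : Fin N ⊕ Fin M) : ((src h k α).card : ℝ) ≤ den h k α := by
  rcases α with i | j
  · simp only [src, den, Finset.card_disjSum, Finset.card_erase_of_mem (Finset.mem_univ _),
      Finset.card_univ, Fintype.card_fin]
    split_ifs
    · rw [Fin.card_filter_val_lt]
      push_cast [Nat.cast_pred i.pos]
      linarith [min_le_right (M : ℝ) h]
    · simp [Nat.cast_pred i.pos]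
  · simp only [src, den, Finset.card_disjSum, Finset.card_erase_of_mem (Finset.mem_univ _),
      Finset.card_univ, Fintype.card_fin]
    split_ifs
    · rw [Fin.card_filter_val_lt]
      push_cast [Nat.cast_pred j.pos]
      linarith [min_le_right (N : ℝ) k]
    · simp [Nat.cast_pred j.pos]

theorem den_pos (hN : 2 ≤ N) (hM : 2 ≤ M) (α : Fin N ⊕ Fin M) : 0 < den h k α := by
  have hN' : (2 : ℝ) ≤ N := by exact_mod_cast hN
  have hM' : (2 : ℝ) ≤ M := by exact_mod_cast hM
  have hh : (0 : ℝ) ≤ h := h.cast_nonneg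
  have hk : (0 : ℝ) ≤ k := k.cast_nonneg
  rcases α with i | j <;> simp only [den] <;> split_ifs <;> linarith

theorem den_le (hhM : h < M) (hkN : k < N) (α : Fin N ⊕ Fin M) : den h k α ≤ N + M := by
  have hh : (h : ℝ) ≤ M := by exact_mod_cast hhM.le
  have hk : (k : ℝ) ≤ N := by exact_mod_cast hkN.le
  have hN : (0 : ℝ) ≤ N := N.cast_nonneg
  have hM : (0 : ℝ) ≤ M := M.cast_nonneg
  rcases α with i | j <;> simp only [den] <;> split_ifs <;> linarith

variable {τ : ℝ} {ψ ψs φ φs : EuclideanSpace ℝ (Fin d) → EuclideanSpace ℝ (Fin d) → ℝ}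
  {x : Fin N → ℝ → EuclideanSpace ℝ (Fin d)} {y : Fin M → ℝ → EuclideanSpace ℝ (Fin d)}

theorem hasDerivAt_of_isSol (hsol : IsSol h k τ ψ ψs φ φs x y) (α : Fin N ⊕ Fin M) {t : ℝ}
    (ht : 0 < t) :
    HasDerivAt (Sum.elim x y α) (∑ β ∈ src h k α, weight h k τ ψ ψs φ φs x y α β t •
      (Sum.elim x y β (t - delay τ α β) - Sum.elim x y α t)) t := by
  rcases α with i | j
  · by_cases hi : (i : ℕ) < k
    · simpa [src, weight, delay, den, influence, hi, Finset.sum_disjSum]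
        using hsol.odex_lead i hi t ht
    · simpa [src, weight, delay, den, influence, hi, Finset.sum_disjSum]
        using hsol.odex_foll i (not_lt.1 hi) t ht
  · by_cases hj : (j : ℕ) < h
    · simpa [src, weight, delay, den, influence, hj, Finset.sum_disjSum, add_comm]
        using hsol.odey_lead j hj t ht
    · simpa [src, weight, delay, den, influence, hj, Finset.sum_disjSum]
        using hsol.odey_foll j (not_lt.1 hj) t ht

end TwoPopHK

theorem admissible_influence {d : ℕ}
    {ψ ψs φ φs : EuclideanSpace ℝ (Fin d) → EuclideanSpace ℝ (Fin d) → ℝ}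
    (hψ : Admissible ψ) (hψs : Admissible ψs) (hφ : Admissible φ) (hφs : Admissible φs) :
    ∀ p, Admissible (TwoPopHK.influence ψ ψs φ φs p) := by
  rintro ⟨_ | _, _ | _⟩ <;> assumption

open TwoPopHK in
def IsSol.toDelayedNetwork {d N M h k : ℕ} {τ Λ : ℝ}
    {ψ ψs φ φs : EuclideanSpace ℝ (Fin d) → EuclideanSpace ℝ (Fin d) → ℝ}
    {x : Fin N → ℝ → EuclideanSpace ℝ (Fin d)} {y : Fin M → ℝ → EuclideanSpace ℝ (Fin d)}
    (hsol : IsSol h k τ ψ ψs φ φs x y) (hτ : 0 ≤ τ)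
    (hf : ∀ p z₁ z₂, influence ψ ψs φ φs p z₁ z₂ ∈ Icc 0 Λ) :
    DelayedNetwork (Fin N ⊕ Fin M) (EuclideanSpace ℝ (Fin d)) τ Λ where
  z := Sum.elim x y
  src := src h k
  delay := delay τ
  weight := weight h k τ ψ ψs φ φs x y
  continuous_z := by
    rintro (i | j)
    exacts [hsol.contx i, hsol.conty j]
  delay_mem α β := by
    unfold delay
    split_ifs <;> simp [hτ]
  weight_nonneg α β t := div_nonneg (hf _ _ _).1 (den_nonneg h k α)
  sum_weight_le α t := sum_div_le_of_card_le (card_src_le h k α) (fun β _ => (hf _ _ _).2)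
    ((hf (true, true) 0 0).1.trans (hf (true, true) 0 0).2)
  hasDerivAt_z α t ht := hasDerivAt_of_isSol h k hsol α ht

open TwoPopHK in
theorem IsSol.isTwoPopulation {d N M h k : ℕ} {τ Λ : ℝ}
    {ψ ψs φ φs : EuclideanSpace ℝ (Fin d) → EuclideanSpace ℝ (Fin d) → ℝ}
    {x : Fin N → ℝ → EuclideanSpace ℝ (Fin d)} {y : Fin M → ℝ → EuclideanSpace ℝ (Fin d)}
    (hsol : IsSol h k τ ψ ψs φ φs x y) (hτ : 0 ≤ τ)
    (hf : ∀ p z₁ z₂, influence ψ ψs φ φs p z₁ z₂ ∈ Icc 0 Λ)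
    (hN : 2 ≤ N) (hM : 2 ≤ M) (hk1 : 1 ≤ k) (hkN : k < N) (hh1 : 1 ≤ h) (hhM : h < M)
    {B Γ : ℝ} (hB : ∀ α t, -τ ≤ t → ‖Sum.elim x y α t‖ ≤ B) (hΓ0 : 0 < Γ)
    (hΓ : ∀ p z₁ z₂, ‖z₁‖ ≤ B → ‖z₂‖ ≤ B → Γ ≤ influence ψ ψs φ φs p z₁ z₂) :
    (hsol.toDelayedNetwork hτ hf).IsTwoPopulation Sum.isLeft (IsLeader h k) (Γ / (N + M)) where
  mem_src_of_pop_eq := by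
    rintro (i | j) (i' | j') hpop hne <;>
      simp_all [IsSol.toDelayedNetwork, src, delay, eq_comm]
  mem_src_of_isLeader := by
    rintro (i | j) (i' | j') hα hβ hpop <;>
      simp_all [IsSol.toDelayedNetwork, src, IsLeader]
  exists_isLeader := by
    rintro (_ | _)
    exacts [⟨.inr ⟨0, by omega⟩, rfl, by simp [IsLeader]; omega⟩,
      ⟨.inl ⟨0, by omega⟩, rfl, by simp [IsLeader]; omega⟩]
  le_weight α β t _ ht := by
    have hden := den_pos h k hN hM α
    have hdelay : delay τ α β ≤ τ := ((hsol.toDelayedNetwork hτ hf).delay_mem α β).2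
    calc Γ / (N + M) ≤ Γ / den h k α :=
          div_le_div_of_nonneg_left hΓ0.le hden (den_le h k hhM hkN α)
      _ ≤ weight h k τ ψ ψs φ φs x y α β t :=
          div_le_div_of_nonneg_right (hΓ _ _ _ (hB α t (by linarith)) (hB β _ (by linarith)))
            hden.le

theorem stmt16_general
    (d N M h k : ℕ) (hN : 2 ≤ N) (hM2 : 2 ≤ M)
    (hh1 : 1 ≤ h) (hhM : h < M) (hk1 : 1 ≤ k) (hkN : k < N)
    (τ : ℝ) (hτ : 0 < τ)
    (ψ ψs φ φs : EuclideanSpace ℝ (Fin d) → EuclideanSpace ℝ (Fin d) → ℝ)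
    (hψ : Admissible ψ) (hψs : Admissible ψs) (hφ : Admissible φ) (hφs : Admissible φs)
    (x : Fin N → ℝ → EuclideanSpace ℝ (Fin d)) (y : Fin M → ℝ → EuclideanSpace ℝ (Fin d))
    (hsol : IsSol h k τ ψ ψs φ φs x y)
    :
    Tendsto (fun t : ℝ =>
      max (max (⨆ p : Fin N × Fin N, ‖x p.1 t - x p.2 t‖)
               (⨆ p : Fin M × Fin M, ‖y p.1 t - y p.2 t‖))
          (⨆ p : Fin N × Fin M, ‖x p.1 t - y p.2 t‖)) atTop (nhds 0) := by
  have hadm := admissible_influence hψ hψs hφ hφs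
  obtain ⟨Λ, hΛ⟩ := exists_forall_mem_Icc_of_admissible hadm
  have hΛ0 : 0 < Λ := ((hadm (true, true)).2.1 0 0).trans_le (hΛ (true, true) 0 0).2
  set P := hsol.toDelayedNetwork hτ.le hΛ
  obtain ⟨B, hB⟩ := exists_norm_le_on_Icc P.continuous_z (-τ) 0
  have hPB : ∀ α t, -τ ≤ t → ‖P.z α t‖ ≤ B := fun α t ht =>
    P.norm_le_of_window hΛ0 le_rfl (by simpa using hB) (by simpa using ht)
  obtain ⟨Γ, hΓ0, hΓ⟩ := exists_pos_le_of_admissible hadm B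
  have hP := hsol.isTwoPopulation hτ.le hΛ hN hM2 hk1 hkN hh1 hhM hPB hΓ0 hΓ
  refine tendsto_of_tendsto_of_tendsto_of_le_of_le tendsto_const_nhds
    (hP.tendsto_iSup_norm_sub (by positivity) hτ fun α t ht => hPB α t (by linarith))
    (fun t => le_max_of_le_right (Real.iSup_nonneg fun _ => norm_nonneg _))
    (fun t => max_iSup_norm_sub_le_iSup x y t)

theorem stmt16
    (d N M h k : ℕ) (hd : 1 ≤ d) (hN : 2 ≤ N) (hM2 : 2 ≤ M) (hMN : M ≤ N)
    (hh1 : 1 ≤ h) (hhM : h < M) (hk1 : 1 ≤ k) (hkN : k < N)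
    (τ : ℝ) (hτ : 0 < τ)
    (ψ ψs φ φs : EuclideanSpace ℝ (Fin d) → EuclideanSpace ℝ (Fin d) → ℝ)
    (hψ : Admissible ψ) (hψs : Admissible ψs) (hφ : Admissible φ) (hφs : Admissible φs)
    (x : Fin N → ℝ → EuclideanSpace ℝ (Fin d)) (y : Fin M → ℝ → EuclideanSpace ℝ (Fin d))
    (hsol : IsSol h k τ ψ ψs φ φs x y)
    :
    Tendsto (fun t : ℝ =>
      max (max (⨆ p : Fin N × Fin N, ‖x p.1 t - x p.2 t‖)
               (⨆ p : Fin M × Fin M, ‖y p.1 t - y p.2 t‖))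
          (⨆ p : Fin N × Fin M, ‖x p.1 t - y p.2 t‖)) atTop (nhds 0) :=
  stmt16_general d N M h k hN hM2 hh1 hhM hk1 hkN τ hτ ψ ψs φ φs hψ hψs hφ hφs x y hsol
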